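/- Let $f(x)=1/\sqrt{x}$ (sum-connectivity specialization in one variable). For all real numbers $x\neq y$ with $x,y\geq 3$, $\frac{1/\sqrt{x}-1/\sqrt{y}}{x-y}\neq \frac{1}{\sqrt{2}}-1$, and for every natural number $t\geq 0$ and real $x>0$ with $x\neq 2$, $\frac{1}{\sqrt{x+2t+1}}-\frac{1}{\sqrt{x+2t+4}}\neq \frac{1}{\sqrt{2t+3}}-\frac{1}{\sqrt{2t+6}}$. -/

import Mathlib

private lemma key (u v : ℝ) (hu : 0 < u) (huv : u < v) :
    1 / Real.sqrt u - 1 / Real.sqrt v =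
      (v - u) / (Real.sqrt u * Real.sqrt v * (Real.sqrt u + Real.sqrt v)) := by
  have hv : 0 < v := hu.trans huv
  have hsu : 0 < Real.sqrt u := Real.sqrt_pos.mpr hu
  have hsv : 0 < Real.sqrt v := Real.sqrt_pos.mpr hv
  have h1 : Real.sqrt u * Real.sqrt u = u := Real.mul_self_sqrt hu.le
  have h2 : Real.sqrt v * Real.sqrt v = v := Real.mul_self_sqrt hv.le
  field_simp
  linear_combination h2 - h1

private lemma hanti (u v : ℝ) (hu : 0 < u) (huv : u < v) :
    1 / Real.sqrt v - 1 / Real.sqrt (v + 3) <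
      1 / Real.sqrt u - 1 / Real.sqrt (u + 3) := by
  have hv : 0 < v := hu.trans huv
  have hu3 : 0 < u + 3 := by linarith
  have hv3 : 0 < v + 3 := by linarith
  have e1 := key u v hu huv
  have e2 := key (u + 3) (v + 3) hu3 (by linarith)
  have hsu : 0 < Real.sqrt u := Real.sqrt_pos.mpr hu
  have hsv : 0 < Real.sqrt v := Real.sqrt_pos.mpr hv
  have hsu3 : 0 < Real.sqrt (u + 3) := Real.sqrt_pos.mpr hu3
  have hsv3 : 0 < Real.sqrt (v + 3) := Real.sqrt_pos.mpr hv3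
  have l1 : Real.sqrt u < Real.sqrt (u + 3) := Real.sqrt_lt_sqrt hu.le (by linarith)
  have l2 : Real.sqrt v < Real.sqrt (v + 3) := Real.sqrt_lt_sqrt hv.le (by linarith)
  set A := Real.sqrt u * Real.sqrt v * (Real.sqrt u + Real.sqrt v) with hA
  set B := Real.sqrt (u + 3) * Real.sqrt (v + 3) * (Real.sqrt (u + 3) + Real.sqrt (v + 3)) with hB
  have hApos : 0 < A := by positivity
  have hBpos : 0 < B := by positivity
  have hAB : A < B := by
    have inner : Real.sqrt u * Real.sqrt v < Real.sqrt (u + 3) * Real.sqrt (v + 3) :=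
      mul_lt_mul'' l1 l2 hsu.le hsv.le
    exact mul_lt_mul'' inner (by linarith) (by positivity) (by positivity)
  have hfrac : (v - u) / B < (v - u) / A := by
    apply div_lt_div_of_pos_left (by linarith) hApos hAB
  have e2' : 1 / Real.sqrt (u + 3) - 1 / Real.sqrt (v + 3) = (v - u) / B := by
    rw [e2]; congr 1; ring
  linarith [e1, e2', hfrac]

theorem stmt_5 :
    (∀ x y : ℝ, 3 ≤ x → 3 ≤ y → x ≠ y →
      (1 / Real.sqrt x - 1 / Real.sqrt y) / (x - y) ≠ 1 / Real.sqrt 2 - 1) ∧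
    (∀ (t : ℕ) (x : ℝ), 0 < x → x ≠ 2 →
      1 / Real.sqrt (x + 2 * t + 1) - 1 / Real.sqrt (x + 2 * t + 4) ≠
        1 / Real.sqrt (2 * t + 3) - 1 / Real.sqrt (2 * t + 6)) := by
  constructor
  · -- first part
    have s2l : (1.4 : ℝ) < Real.sqrt 2 := by
      nlinarith [Real.sq_sqrt (show (0:ℝ) ≤ 2 by norm_num), Real.sqrt_nonneg 2]
    have s2u : Real.sqrt 2 < 1.5 := by
      nlinarith [Real.sq_sqrt (show (0:ℝ) ≤ 2 by norm_num), Real.sqrt_nonneg 2]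
    have main : ∀ x y : ℝ, 3 ≤ x → 3 ≤ y → x < y →
        (1 / Real.sqrt x - 1 / Real.sqrt y) / (x - y) ≠ 1 / Real.sqrt 2 - 1 := by
      intro x y hx hy hxy h
      have hx0 : (0:ℝ) < x := by linarith
      have e1 := key x y hx0 hxy
      have hsx : Real.sqrt 3 ≤ Real.sqrt x := Real.sqrt_le_sqrt hx
      have hsy : Real.sqrt 3 ≤ Real.sqrt y := Real.sqrt_le_sqrt hy
      have s3l : (1.7 : ℝ) < Real.sqrt 3 := by
        nlinarith [Real.sq_sqrt (show (0:ℝ) ≤ 3 by norm_num), Real.sqrt_nonneg 3]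
      set D := Real.sqrt x * Real.sqrt y * (Real.sqrt x + Real.sqrt y) with hD
      have a1 : (1.7:ℝ) < Real.sqrt x := lt_of_lt_of_le s3l hsx
      have a2 : (1.7:ℝ) < Real.sqrt y := lt_of_lt_of_le s3l hsy
      have b1 : (2.89:ℝ) < Real.sqrt x * Real.sqrt y := by nlinarith
      have b2 : (3.4:ℝ) < Real.sqrt x + Real.sqrt y := by linarith
      have hDge : (9.8 : ℝ) < D := by nlinarith
      have hDpos : 0 < D := by linarith
      rw [e1] at h
      have hxyne : x - y ≠ 0 := by linarith
      have h2 : (y - x) / D / (x - y) = -(1 / D) := by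
        field_simp
        ring
      rw [h2] at h
      -- h : -(1/D) = 1/√2 - 1
      have hD1 : 1 / D < 0.2 := by
        rw [div_lt_iff₀ hDpos]; linarith
      have hs2 : (0.6 : ℝ) < 1 / Real.sqrt 2 := by
        rw [lt_div_iff₀ (by linarith)]; linarith
      have hs2' : 1 / Real.sqrt 2 < 0.75 := by
        rw [div_lt_iff₀ (by linarith)]; linarith
      linarith
    intro x y hx hy hxy h
    rcases lt_or_gt_of_ne hxy with hlt | hgt
    · exact main x y hx hy hlt h
    · have : (1 / Real.sqrt y - 1 / Real.sqrt x) / (y - x) = 1 / Real.sqrt 2 - 1 := by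
        rw [← h]
        have h1 : x - y ≠ 0 := sub_ne_zero.mpr hxy
        have h2 : y - x ≠ 0 := sub_ne_zero.mpr hxy.symm
        field_simp
        ring
      exact main y x hy hx hgt this
  · intro t x hx hne h
    have ht : (0:ℝ) ≤ (t:ℝ) := Nat.cast_nonneg t
    have e1 : x + 2 * (t:ℝ) + 4 = (x + 2 * t + 1) + 3 := by ring
    have e2 : 2 * (t:ℝ) + 6 = (2 * t + 3) + 3 := by ring
    rw [e1, e2] at h
    have hu : (0:ℝ) < x + 2 * t + 1 := by linarith
    have hw : (0:ℝ) < 2 * (t:ℝ) + 3 := by linarith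
    rcases lt_or_gt_of_ne hne with hlt | hgt
    · have := hanti (x + 2 * t + 1) (2 * t + 3) hu (by linarith)
      linarith
    · have := hanti (2 * t + 3) (x + 2 * t + 1) hw (by linarith)
      linarith
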